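/- Let G, Ĝ ∈ 𝕆^{n×k} with tr(GᵀD) > 0. If ĜᵀD = DᵀĜ and ĜᵀD is positive semidefinite, and tr(Ĝᵀ E(G) Ĝ) ≤ tr(Gᵀ E(G) G), then η(Ĝ) ≥ η(G). -/

import Mathlib

/-!
Write `a = tr(ĜᵀAĜ)`, `b = tr(GᵀAG)`, `t = tr(GᵀD)`, `s = tr(ĜᵀD)`. Since `ξ(G) t = b`,
`tr(GᵀE(G)G) = -b`, while `tr(ĜᵀE(G)Ĝ) = a - 2ξ(G) tr(GᵀĜ ĜᵀD) ≥ a - 2ξ(G) s` because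
`GᵀĜ` is a contraction and `ĜᵀD` is positive semidefinite. The hypothesis thus gives
`a + b ≤ 2bs/t`, and `4ab ≤ (a + b)²` turns this into `a t² ≤ b s²`, i.e. `η(G) ≤ η(Ĝ)`.
-/

open Matrix

/-- The objective `η(G) = tr(GᵀD)² / tr(GᵀAG)`. -/
noncomputable def eta {n k : ℕ} (A : Matrix (Fin n) (Fin n) ℝ)
    (D G : Matrix (Fin n) (Fin k) ℝ) : ℝ :=
  (Matrix.trace (Gᵀ * D)) ^ 2 / Matrix.trace (Gᵀ * A * G)

/-- `ξ(G) = tr(GᵀAG) / tr(GᵀD)`. -/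
noncomputable def xi {n k : ℕ} (A : Matrix (Fin n) (Fin n) ℝ)
    (D G : Matrix (Fin n) (Fin k) ℝ) : ℝ :=
  Matrix.trace (Gᵀ * A * G) / Matrix.trace (Gᵀ * D)

/-- `sym(B) = (B + Bᵀ)/2`. -/
noncomputable def symPart {k : ℕ} (B : Matrix (Fin k) (Fin k) ℝ) : Matrix (Fin k) (Fin k) ℝ :=
  (1 / 2 : ℝ) • (B + Bᵀ)

/-- `M(G) = sym(GᵀAG − ξ(G)·GᵀD)`. -/
noncomputable def Mmat {n k : ℕ} (A : Matrix (Fin n) (Fin n) ℝ)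
    (D G : Matrix (Fin n) (Fin k) ℝ) : Matrix (Fin k) (Fin k) ℝ :=
  symPart (Gᵀ * A * G - xi A D G • (Gᵀ * D))

/-- `E(G) = A − ξ(G)·(DGᵀ + GDᵀ)`. -/
noncomputable def Emat {n k : ℕ} (A : Matrix (Fin n) (Fin n) ℝ)
    (D G : Matrix (Fin n) (Fin k) ℝ) : Matrix (Fin n) (Fin n) ℝ :=
  A - xi A D G • (D * Gᵀ + G * Dᵀ)

/-- The Frobenius norm of a real matrix. -/
noncomputable def frobNorm {n k : ℕ} (M : Matrix (Fin n) (Fin k) ℝ) : ℝ :=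
  Real.sqrt (∑ i, ∑ j, (M i j) ^ 2)

/-- `G` is a local maximizer of `η` on the Stiefel manifold `𝕆^{n×k}`. -/
def IsLocalMaxEta {n k : ℕ} (A : Matrix (Fin n) (Fin n) ℝ)
    (D G : Matrix (Fin n) (Fin k) ℝ) : Prop :=
  Gᵀ * G = 1 ∧ ∃ ε > (0 : ℝ), ∀ G' : Matrix (Fin n) (Fin k) ℝ,
    G'ᵀ * G' = 1 → frobNorm (G' - G) < ε → eta A D G' ≤ eta A D G

namespace Matrix

variable {m n : Type*} [Fintype m] [Fintype n] [DecidableEq n]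

lemma trace_transpose_mul_mul_pos [Nonempty n] {A : Matrix m m ℝ} (hA : A.PosDef)
    {G : Matrix m n ℝ} (hG : Gᵀ * G = 1) : 0 < (Gᵀ * A * G).trace := by
  have hinj : Function.Injective G.mulVec := fun x y hxy => by
    simpa [mulVec_mulVec, hG] using congrArg (Gᵀ *ᵥ ·) hxy
  simpa [conjTranspose_eq_transpose_of_trivial] using
    (hA.conjTranspose_mul_mul_same hinj).trace_pos

/-- `(X - Y)ᵀ(X - Y) = 2 - XᵀY - YᵀX` is positive semidefinite, so its trace against `P`
is nonnegative. -/
lemma trace_transpose_mul_mul_le_trace {P : Matrix n n ℝ} (hP : P.PosSemidef)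
    {X Y : Matrix m n ℝ} (hX : Xᵀ * X = 1) (hY : Yᵀ * Y = 1) :
    (Xᵀ * Y * P).trace ≤ P.trace := by
  have hPsymm : Pᵀ = P := by
    simpa [conjTranspose_eq_transpose_of_trivial] using hP.isHermitian.eq
  have hswap : (Yᵀ * X * P).trace = (Xᵀ * Y * P).trace := by
    rw [← trace_transpose, transpose_mul, transpose_mul, transpose_transpose, hPsymm,
      trace_mul_comm]
  have hnonneg := (hP.mul_mul_conjTranspose_same (X - Y)).trace_nonneg
  have hexpand : ((X - Y) * P * (X - Y)ᴴ).trace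
      = 2 * P.trace - (Xᵀ * Y * P).trace - (Yᵀ * X * P).trace := by
    rw [conjTranspose_eq_transpose_of_trivial, trace_mul_comm, ← Matrix.mul_assoc]
    simp only [transpose_sub, Matrix.sub_mul, Matrix.mul_sub, hX, hY, trace_sub, Matrix.one_mul]
    ring
  linarith

end Matrix

lemma trace_transpose_mul_Emat_mul {n k : ℕ} (A : Matrix (Fin n) (Fin n) ℝ)
    (D G H : Matrix (Fin n) (Fin k) ℝ) :
    (Hᵀ * Emat A D G * H).trace
      = (Hᵀ * A * H).trace - 2 * xi A D G * (Gᵀ * H * (Hᵀ * D)).trace := by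
  have hcycle : (Hᵀ * (D * Gᵀ) * H).trace = (Gᵀ * H * (Hᵀ * D)).trace := by
    rw [← Matrix.mul_assoc, trace_mul_comm, ← Matrix.mul_assoc, trace_mul_comm,
      ← Matrix.mul_assoc]
  have htranspose : (Hᵀ * (G * Dᵀ) * H).trace = (Hᵀ * (D * Gᵀ) * H).trace := by
    rw [← trace_transpose]
    simp only [transpose_mul, transpose_transpose, Matrix.mul_assoc]
  simp only [Emat, Matrix.mul_sub, Matrix.sub_mul, Matrix.mul_smul, Matrix.smul_mul,
    trace_sub, trace_smul, smul_eq_mul, Matrix.mul_add, Matrix.add_mul, trace_add,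
    htranspose, hcycle]
  ring

lemma trace_transpose_mul_Emat_mul_self {n k : ℕ} (A : Matrix (Fin n) (Fin n) ℝ)
    (D G : Matrix (Fin n) (Fin k) ℝ) (hG : Gᵀ * G = 1) (hD : (Gᵀ * D).trace ≠ 0) :
    (Gᵀ * Emat A D G * G).trace = -(Gᵀ * A * G).trace := by
  rw [trace_transpose_mul_Emat_mul, ← Matrix.mul_assoc, hG, Matrix.one_mul, xi]
  field_simp
  ring

/-- AM–GM: `4ab ≤ (a + b)² ≤ (2bs/t)²`. -/
lemma sq_div_le_sq_div_of_add_le {a b s t : ℝ} (ha : 0 < a) (hb : 0 < b) (ht : 0 < t)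
    (h : a + b ≤ 2 * (b / t) * s) : t ^ 2 / b ≤ s ^ 2 / a := by
  rw [div_le_div_iff₀ hb ha]
  have hcleared : t * (a + b) ≤ 2 * b * s := by
    calc t * (a + b) ≤ t * (2 * (b / t) * s) := by gcongr
      _ = 2 * b * s := by field_simp
  nlinarith [sq_nonneg (a - b), mul_pos ha hb, mul_pos ht (add_pos ha hb)]

theorem eta_ge_of_trace_le_general
    (n k : ℕ) (hk1 : 1 ≤ k)
    (A : Matrix (Fin n) (Fin n) ℝ) (hA : A.PosDef)
    (D : Matrix (Fin n) (Fin k) ℝ)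
    (G Ghat : Matrix (Fin n) (Fin k) ℝ) (hG : Gᵀ * G = 1) (hGhat : Ghatᵀ * Ghat = 1)
    (htr : 0 < Matrix.trace (Gᵀ * D))
    (hpsd : (Ghatᵀ * D).PosSemidef)
    (hle : Matrix.trace (Ghatᵀ * Emat A D G * Ghat) ≤ Matrix.trace (Gᵀ * Emat A D G * G)) :
    eta A D G ≤ eta A D Ghat := by
  have : Nonempty (Fin k) := ⟨⟨0, hk1⟩⟩
  have hb := trace_transpose_mul_mul_pos hA hG
  have ha := trace_transpose_mul_mul_pos hA hGhat
  have hxi : 0 ≤ xi A D G := div_nonneg hb.le htr.le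
  have hcross :=
    mul_le_mul_of_nonneg_left (trace_transpose_mul_mul_le_trace hpsd hG hGhat) hxi
  rw [trace_transpose_mul_Emat_mul, trace_transpose_mul_Emat_mul_self A D G hG htr.ne'] at hle
  refine sq_div_le_sq_div_of_add_le ha hb htr ?_
  change _ ≤ 2 * xi A D G * _
  linarith

/-- if `tr(GᵀD) > 0`, `ĜᵀD = DᵀĜ` is positive semidefinite, and
`tr(ĜᵀE(G)Ĝ) ≤ tr(GᵀE(G)G)`, then `η(Ĝ) ≥ η(G)`. -/
theorem eta_ge_of_trace_le
    (n k : ℕ) (hk1 : 1 ≤ k) (hkn : k < n)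
    (A : Matrix (Fin n) (Fin n) ℝ) (hA : A.PosDef)
    (D : Matrix (Fin n) (Fin k) ℝ)
    (G Ghat : Matrix (Fin n) (Fin k) ℝ) (hG : Gᵀ * G = 1) (hGhat : Ghatᵀ * Ghat = 1)
    (htr : 0 < Matrix.trace (Gᵀ * D))
    (hsym : Ghatᵀ * D = Dᵀ * Ghat) (hpsd : (Ghatᵀ * D).PosSemidef)
    (hle : Matrix.trace (Ghatᵀ * Emat A D G * Ghat) ≤ Matrix.trace (Gᵀ * Emat A D G * G)) :
    eta A D G ≤ eta A D Ghat :=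
  eta_ge_of_trace_le_general n k hk1 A hA D G Ghat hG hGhat htr hpsd hle
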